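/- arXiv:2003.11330 — 4 statements merged into one kernel-verified Lean document; each statement's English description precedes it below -/
import Mathlib

section
/- Suppose f : ℝ^m → ℝ^m is continuously differentiable and there exist a positive vector Λ ∈ ℝ^m and ε > 0 such that for every j and every x ∈ ℝ^m, Λ_j (∂f_j/∂x_j)(x) + Σ_{k≠j} Λ_k |(∂f_j/∂x_k)(x)| ≤ -ε Λ_j. Then any solution of x'(t) = f(x(t)) satisfies that ‖e^{εt} x'(t)‖_{Λ,∞} is nonincreasing, where ‖z‖_{Λ,∞} = max_j |Λ_j^{-1} z_j|. -/
/-!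
Put `V t = ‖Λ⁻¹ * x'(t)‖` (sup norm). The dominance condition bounds the weighted logarithmic norm
of the Jacobian by `-ε`: `‖Λ⁻¹ * (w + h • Df w)‖ ≤ (1 - h ε) ‖Λ⁻¹ * w‖` for all small `h > 0`.
As `x'' = Df(x) x'`, a first-order expansion of `x'` shows that the upper right Dini derivative of
`V` is at most `-ε V`, and Gronwall's inequality gives `V t ≤ e^{-ε (t - s)} V s` for `s ≤ t`.
-/

open Set Filter Topology Finset Matrix

section WeightedSupNorm

variable {ι : Type*} [Fintype ι]

theorem Pi.norm_eq_sup'_abs (hne : (univ : Finset ι).Nonempty) (v : ι → ℝ) :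
    ‖v‖ = univ.sup' hne fun j => |v j| := by
  have hle : ∀ j, |v j| ≤ univ.sup' hne fun j => |v j| := fun j =>
    le_sup' (fun j => |v j|) (mem_univ j)
  refine le_antisymm ((pi_norm_le_iff_of_nonneg ((abs_nonneg _).trans (hle hne.choose))).2 hle) ?_
  exact sup'_le _ _ fun j _ => norm_le_pi_norm v j

theorem abs_le_mul_norm_inv_mul {Λ : ι → ℝ} (j : ι) (hΛ : 0 < Λ j) (w : ι → ℝ) :
    |w j| ≤ Λ j * ‖Λ⁻¹ * w‖ := by
  have h : |(Λ j)⁻¹ * w j| ≤ ‖Λ⁻¹ * w‖ := norm_le_pi_norm (Λ⁻¹ * w) j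
  rwa [abs_mul, abs_inv, abs_of_pos hΛ, inv_mul_le_iff₀ hΛ] at h

theorem norm_inv_mul_le_of_abs_le {Λ : ι → ℝ} (hΛ : ∀ j, 0 < Λ j) {w : ι → ℝ} {C : ℝ}
    (hC : 0 ≤ C) (hw : ∀ j, |w j| ≤ Λ j * C) : ‖Λ⁻¹ * w‖ ≤ C := by
  refine (pi_norm_le_iff_of_nonneg hC).2 fun j => ?_
  rw [Pi.mul_apply, Pi.inv_apply, Real.norm_eq_abs, abs_mul, abs_inv, abs_of_pos (hΛ j),
    inv_mul_le_iff₀ (hΛ j)]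
  exact hw j

theorem Matrix.eventually_norm_inv_mul_add_smul_mulVec_le [DecidableEq ι] (A : Matrix ι ι ℝ)
    {Λ : ι → ℝ} (hΛ : ∀ j, 0 < Λ j) {μ : ℝ}
    (hA : ∀ k, Λ k * A k k + ∑ j ∈ univ.erase k, Λ j * |A k j| ≤ μ * Λ k) :
    ∀ᶠ h in 𝓝[>] (0 : ℝ), ∀ w, ‖Λ⁻¹ * (w + h • A *ᵥ w)‖ ≤ (1 + h * μ) * ‖Λ⁻¹ * w‖ := by
  -- Small `h` keeps `1 + h * A k k` positive, so the diagonal term needs no absolute value.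
  have hsmall : ∀ c : ℝ, ∀ᶠ h in 𝓝 (0 : ℝ), 0 < 1 + h * c := fun c =>
    continuousAt_const.eventually_lt (by fun_prop) (by simp)
  filter_upwards [self_mem_nhdsWithin, nhdsWithin_le_nhds (hsmall μ),
    nhdsWithin_le_nhds (eventually_all.2 fun k => hsmall (A k k))]
    with h (hh : 0 < h) hμ hdiag w
  set N := ‖Λ⁻¹ * w‖
  refine norm_inv_mul_le_of_abs_le hΛ (mul_nonneg hμ.le (norm_nonneg _)) fun k => ?_
  have hsplit : (w + h • A *ᵥ w) k
      = (1 + h * A k k) * w k + h * ∑ j ∈ univ.erase k, A k j * w j := by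
    rw [Pi.add_apply, Pi.smul_apply, smul_eq_mul, Matrix.mulVec, dotProduct,
      ← add_sum_erase _ _ (mem_univ k)]
    ring
  calc |(w + h • A *ᵥ w) k|
      ≤ (1 + h * A k k) * |w k| + h * ∑ j ∈ univ.erase k, |A k j| * |w j| := by
        rw [hsplit]
        refine (abs_add_le _ _).trans (add_le_add ?_ ?_)
        · rw [abs_mul, abs_of_pos (hdiag k)]
        · rw [abs_mul, abs_of_pos hh]
          gcongr
          exact (abs_sum_le_sum_abs _ _).trans_eq (by simp only [abs_mul])
    _ ≤ (1 + h * A k k) * (Λ k * N) + h * ∑ j ∈ univ.erase k, |A k j| * (Λ j * N) := by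
        have := hdiag k
        gcongr with j
        · exact abs_le_mul_norm_inv_mul k (hΛ k) w
        · exact abs_le_mul_norm_inv_mul j (hΛ j) w
    _ = (Λ k + h * (Λ k * A k k + ∑ j ∈ univ.erase k, Λ j * |A k j|)) * N := by
        have hsum : ∑ j ∈ univ.erase k, |A k j| * (Λ j * N)
            = (∑ j ∈ univ.erase k, Λ j * |A k j|) * N := by
          rw [sum_mul]
          exact sum_congr rfl fun j _ => by ring
        rw [hsum]
        ring
    _ ≤ (Λ k + h * (μ * Λ k)) * N := by have := hA k; gcongr
    _ = Λ k * ((1 + h * μ) * N) := by ring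

end WeightedSupNorm

theorem eventually_slope_norm_lt {E : Type*} [NormedAddCommGroup E] [NormedSpace ℝ E]
    {y : ℝ → E} {y' : E} {τ μ r : ℝ} (hy : HasDerivWithinAt y y' (Ioi τ) τ)
    (hμ : ∀ᶠ h in 𝓝[>] 0, ‖y τ + h • y'‖ ≤ (1 + h * μ) * ‖y τ‖) (hr : μ * ‖y τ‖ < r) :
    ∀ᶠ z in 𝓝[>] τ, slope (fun t => ‖y t‖) τ z < r := by
  have hshift : Tendsto (fun z => z - τ) (𝓝[>] τ) (𝓝[>] 0) := by
    refine tendsto_nhdsWithin_iff.2 ⟨?_, ?_⟩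
    · simpa only [sub_self] using
        ((continuous_sub_right τ).tendsto τ).mono_left (nhdsWithin_le_nhds (s := Ioi τ))
    · filter_upwards [self_mem_nhdsWithin] with z (hz : τ < z) using sub_pos.2 hz
  have hslope : Tendsto (fun z => ‖slope y τ z - y'‖) (𝓝[>] τ) (𝓝 0) :=
    tendsto_iff_norm_sub_tendsto_zero.1 ((hasDerivWithinAt_iff_tendsto_slope' (lt_irrefl τ)).1 hy)
  filter_upwards [self_mem_nhdsWithin, hshift.eventually hμ,
    hslope.eventually (gt_mem_nhds (sub_pos.2 hr))] with z (hz : τ < z) hzμ hzr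
  have hz' : 0 < z - τ := sub_pos.2 hz
  have hyz : y z = (y τ + (z - τ) • y') + (z - τ) • (slope y τ z - y') := by
    rw [add_assoc, ← smul_add, add_sub_cancel, add_comm, ← vadd_eq_add, sub_smul_slope_vadd]
  have hbound : ‖y z‖ < ‖y τ‖ + (z - τ) * r := by
    calc ‖y z‖ ≤ (1 + (z - τ) * μ) * ‖y τ‖ + (z - τ) * ‖slope y τ z - y'‖ := by
          rw [hyz]
          refine (norm_add_le _ _).trans (add_le_add hzμ ?_)
          rw [norm_smul, Real.norm_of_nonneg hz'.le]
      _ < (1 + (z - τ) * μ) * ‖y τ‖ + (z - τ) * (r - μ * ‖y τ‖) := by gcongr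
      _ = ‖y τ‖ + (z - τ) * r := by ring
  rw [slope_def_field, div_lt_iff₀ hz']
  linarith

theorem antitone_exp_mul_of_frequently_slope_lt {V : ℝ → ℝ} {ε : ℝ} (hV : Continuous V)
    (hslope : ∀ τ r, -ε * V τ < r → ∃ᶠ z in 𝓝[>] τ, slope V τ z < r) :
    Antitone fun t => Real.exp (ε * t) * V t := by
  intro s t hst
  have hgronwall := le_gronwallBound_of_liminf_deriv_right_le (f' := fun τ => -ε * V τ)
    (K := -ε) (ε := 0) hV.continuousOn
    (fun τ _ r hr => by simpa only [slope_def_field, div_eq_inv_mul] using hslope τ r hr)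
    le_rfl (fun _ _ => by simp) t ⟨hst, le_rfl⟩
  rw [gronwallBound_ε0] at hgronwall
  calc Real.exp (ε * t) * V t ≤ Real.exp (ε * t) * (V s * Real.exp (-ε * (t - s))) := by
        gcongr
    _ = Real.exp (ε * s) * V s := by
        rw [mul_left_comm, ← Real.exp_add]
        ring_nf

theorem weighted_contraction_monotone_general (m : ℕ) (hm : 0 < m)
    (f : (Fin m → ℝ) → (Fin m → ℝ)) (hf : ContDiff ℝ 1 f)
    (Λ : Fin m → ℝ) (hΛ : ∀ j, 0 < Λ j) (ε : ℝ)
    (hcond : ∀ (j : Fin m) (x : Fin m → ℝ),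
      Λ j * (fderiv ℝ f x (Pi.single j 1) j) +
        ∑ k ∈ Finset.univ.erase j, Λ k * |fderiv ℝ f x (Pi.single k 1) j| ≤ -ε * Λ j)
    (x : ℝ → Fin m → ℝ) (hx : ∀ t, HasDerivAt x (f (x t)) t) :
    have hne : (Finset.univ : Finset (Fin m)).Nonempty :=
      Finset.univ_nonempty_iff.mpr (Fin.pos_iff_nonempty.mp hm)
    Antitone (fun t => Real.exp (ε * t) *
      Finset.univ.sup' hne fun j => |(Λ j)⁻¹ * f (x t) j|) := by
  intro hne
  have hu : ∀ t, HasDerivAt (fun s => f (x s)) (fderiv ℝ f (x t) (f (x t))) t := fun t =>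
    (hf.differentiable one_ne_zero (x t)).hasFDerivAt.comp_hasDerivAt t (hx t)
  have hV : Continuous fun t => ‖Λ⁻¹ * f (x t)‖ :=
    (continuous_const.mul (hf.continuous.comp
      (continuous_iff_continuousAt.2 fun t => (hx t).continuousAt))).norm
  simp only [← Pi.inv_apply, ← Pi.mul_apply, ← Pi.norm_eq_sup'_abs]
  refine antitone_exp_mul_of_frequently_slope_lt hV fun τ r hr => ?_
  have hL := Matrix.eventually_norm_inv_mul_add_smul_mulVec_le
    (LinearMap.toMatrix' (fderiv ℝ f (x τ)).toLinearMap) hΛ fun k => hcond k (x τ)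
  refine (eventually_slope_norm_lt ((hu τ).const_mul Λ⁻¹).hasDerivWithinAt ?_ hr).frequently
  filter_upwards [hL] with h hh
  simpa only [LinearMap.toMatrix'_mulVec, ContinuousLinearMap.coe_coe, mul_add, mul_smul_comm]
    using hh (f (x τ))

/-- under the weighted diagonal-dominance condition
`Λ_j ∂f_j/∂x_j + ∑_{k≠j} Λ_k |∂f_j/∂x_k| ≤ -ε Λ_j`, along any solution of `x' = f(x)` the
quantity `‖e^{εt} x'(t)‖_{Λ,∞}` is nonincreasing. -/
theorem weighted_contraction_monotone (m : ℕ) (hm : 0 < m)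
    (f : (Fin m → ℝ) → (Fin m → ℝ)) (hf : ContDiff ℝ 1 f)
    (Λ : Fin m → ℝ) (hΛ : ∀ j, 0 < Λ j) (ε : ℝ) (hε : 0 < ε)
    (hcond : ∀ (j : Fin m) (x : Fin m → ℝ),
      Λ j * (fderiv ℝ f x (Pi.single j 1) j) +
        ∑ k ∈ Finset.univ.erase j, Λ k * |fderiv ℝ f x (Pi.single k 1) j| ≤ -ε * Λ j)
    (x : ℝ → Fin m → ℝ) (hx : ∀ t, HasDerivAt x (f (x t)) t) :
    have hne : (Finset.univ : Finset (Fin m)).Nonempty :=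
      Finset.univ_nonempty_iff.mpr (Fin.pos_iff_nonempty.mp hm)
    Antitone (fun t => Real.exp (ε * t) *
      Finset.univ.sup' hne fun j => |(Λ j)⁻¹ * f (x t) j|) :=
  weighted_contraction_monotone_general m hm f hf Λ hΛ ε hcond x hx
end

section
/- Suppose f : ℝ^m → ℝ^m is continuously differentiable and there exists a positive vector Λ and ε > 0 such that for all j and x, Λ_j (∂f_j/∂x_j)(x) + Σ_{k≠j} Λ_k |(∂f_j/∂x_k)(x)| ≤ -ε Λ_j. Then f has at most one zero. -/
/-!
Measure vectors by the weighted sup-norm `max_k |u_k| / Λ_k`. If `x ≠ y` are two zeros, let `j`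
be a coordinate where `u = x - y` attains this norm. The weighted dominance of row `j` of every
Jacobian gives `u_j · (Df(p) u)_j ≤ -ε u_j² < 0` for all `p`, so `t ↦ u_j · f_j(y + t u)` is
strictly decreasing; but it vanishes at `t = 0` and `t = 1`.
-/

open Finset

section WeightedDominance

variable {ι : Type*} [Fintype ι] [DecidableEq ι]

theorem ContinuousLinearMap.apply_eq_sum_single (A : (ι → ℝ) →L[ℝ] (ι → ℝ)) (u : ι → ℝ)
    (j : ι) : A u j = ∑ k, u k * A (Pi.single k 1) j := by
  conv_lhs => rw [← Finset.univ_sum_single u]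
  simp only [map_sum, Finset.sum_apply]
  refine Finset.sum_congr rfl fun k _ => ?_
  rw [← mul_one (u k), ← smul_eq_mul, Pi.single_smul', map_smul, smul_one_mul, Pi.smul_apply,
    smul_eq_mul]

theorem mul_apply_le_of_weighted_row_dominance (A : (ι → ℝ) →L[ℝ] (ι → ℝ)) {Λ : ι → ℝ}
    (hΛ : ∀ k, 0 < Λ k) {c : ℝ} {j : ι}
    (hrow : Λ j * A (Pi.single j 1) j +
      ∑ k ∈ univ.erase j, Λ k * |A (Pi.single k 1) j| ≤ c * Λ j)
    {u : ι → ℝ} (hu : ∀ k, |u k| / Λ k ≤ |u j| / Λ j) :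
    u j * A u j ≤ c * u j ^ 2 := by
  set M := |u j| / Λ j
  have hM : 0 ≤ M := div_nonneg (abs_nonneg _) (hΛ j).le
  have huk : ∀ k, |u k| ≤ M * Λ k := fun k => (div_le_iff₀ (hΛ k)).mp (hu k)
  have huj : |u j| = M * Λ j := (div_mul_cancel₀ _ (hΛ j).ne').symm
  set a : ι → ℝ := fun k => A (Pi.single k 1) j
  have hoff : ∀ k, u j * (u k * a k) ≤ |u j| * (M * (Λ k * |a k|)) := fun k =>
    calc u j * (u k * a k) ≤ |u j * (u k * a k)| := le_abs_self _
      _ = |u j| * (|u k| * |a k|) := by rw [abs_mul, abs_mul]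
      _ ≤ |u j| * (M * Λ k * |a k|) := by gcongr; exact huk k
      _ = |u j| * (M * (Λ k * |a k|)) := by ring
  have hdiag : u j * (u j * a j) = |u j| * (M * (Λ j * a j)) := by
    rw [← mul_assoc, ← sq, ← sq_abs, sq, huj]; ring
  calc u j * A u j
      = u j * (u j * a j) + ∑ k ∈ univ.erase j, u j * (u k * a k) := by
        rw [A.apply_eq_sum_single, Finset.mul_sum, ← Finset.add_sum_erase _ _ (mem_univ j)]
    _ ≤ |u j| * (M * (Λ j * a j)) + ∑ k ∈ univ.erase j, |u j| * (M * (Λ k * |a k|)) :=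
        add_le_add hdiag.le (Finset.sum_le_sum fun k _ => hoff k)
    _ = |u j| * M * (Λ j * a j + ∑ k ∈ univ.erase j, Λ k * |a k|) := by
        rw [← Finset.mul_sum, ← Finset.mul_sum]; ring
    _ ≤ |u j| * M * (c * Λ j) := by gcongr
    _ = c * u j ^ 2 := by rw [mul_comm c, ← mul_assoc, mul_assoc _ M, ← huj, ← sq_abs]; ring

end WeightedDominance

theorem apply_lt_apply_of_forall_fderiv_neg {E F : Type*} [NormedAddCommGroup E]
    [NormedSpace ℝ E] [NormedAddCommGroup F] [NormedSpace ℝ F] {f : E → F}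
    (hf : Differentiable ℝ f) (ℓ : F →L[ℝ] ℝ) {x y : E}
    (hneg : ∀ p, ℓ (fderiv ℝ f p (x - y)) < 0) : ℓ (f x) < ℓ (f y) := by
  let γ : ℝ → E := fun t => y + t • (x - y)
  have hγ : ∀ t, HasDerivAt γ (x - y) t := fun t => by
    simpa only [one_smul] using ((hasDerivAt_id' t).smul_const (x - y)).const_add y
  have hderiv : ∀ t, HasDerivAt (fun t => ℓ (f (γ t))) (ℓ (fderiv ℝ f (γ t) (x - y))) t :=
    fun t => ℓ.hasFDerivAt.comp_hasDerivAt t ((hf (γ t)).hasFDerivAt.comp_hasDerivAt t (hγ t))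
  have hanti : StrictAnti fun t => ℓ (f (γ t)) :=
    strictAnti_of_deriv_neg fun t => (hderiv t).deriv ▸ hneg (γ t)
  simpa [γ] using hanti zero_lt_one

/-- under the weighted diagonal-dominance condition
`Λ_j ∂f_j/∂x_j + ∑_{k≠j} Λ_k |∂f_j/∂x_k| ≤ -ε Λ_j`, `f` has at most one zero. -/
theorem weighted_contraction_unique_zero (m : ℕ)
    (f : (Fin m → ℝ) → (Fin m → ℝ)) (hf : ContDiff ℝ 1 f)
    (Λ : Fin m → ℝ) (hΛ : ∀ j, 0 < Λ j) (ε : ℝ) (hε : 0 < ε)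
    (hcond : ∀ (j : Fin m) (x : Fin m → ℝ),
      Λ j * (fderiv ℝ f x (Pi.single j 1) j) +
        ∑ k ∈ Finset.univ.erase j, Λ k * |fderiv ℝ f x (Pi.single k 1) j| ≤ -ε * Λ j) :
    ∀ x y : Fin m → ℝ, f x = 0 → f y = 0 → x = y := by
  intro x y hx hy
  by_contra hne
  set u := x - y
  obtain ⟨k₀, hk₀⟩ : ∃ k, u k ≠ 0 := Function.ne_iff.mp (sub_ne_zero.mpr hne)
  have : Nonempty (Fin m) := ⟨k₀⟩
  obtain ⟨j, hj⟩ := Finite.exists_max fun k => |u k| / Λ k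
  have huj : u j ≠ 0 := fun h0 =>
    (div_pos (abs_pos.mpr hk₀) (hΛ k₀)).not_ge (by simpa [h0] using hj k₀)
  have hneg : ∀ p, u j * fderiv ℝ f p u j < 0 := fun p =>
    (mul_apply_le_of_weighted_row_dominance _ hΛ (hcond j p) hj).trans_lt
      (mul_neg_of_neg_of_pos (neg_neg_of_pos hε) (sq_pos_of_ne_zero huj))
  have := apply_lt_apply_of_forall_fderiv_neg (hf.differentiable one_ne_zero)
    (u j • ContinuousLinearMap.proj j) (x := x) (y := y) hneg
  simp [hx, hy] at this
end

section
/- Let y : [-τ₀,∞) → [0,∞) be continuous and differentiable on (0,∞), let μ be positive, nondecreasing, and C¹, and suppose that whenever μ(t)y(t) = sup_{t-τ(t) ≤ s ≤ t} μ(s)y(s) with t > 0, the upper right derivative satisfies d/dt[μ(t)y(t)] < 0. Then P(t) := sup_{t-τ(t) ≤ s ≤ t} μ(s)y(s) is nonincreasing on (0,∞), and consequently y(t) ≤ P(0)/μ(t) for all t ≥ 0. -/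
/-!
Write `f = μ y` and let `P(t)` be the supremum of `f` over the window `[t - τ(t), t]`. Since the
window's left end is nondecreasing, `P(b) ≤ max (P(a), sup_{[a,b]} f)` for `a ≤ b`, so it suffices
that `f` never exceeds `P(a)` on `[a, b]`. This follows by continuous induction: at a first point
where `f` reaches the level `P(a)`, the value `f(t)` is itself the window maximum, so the negative
Dini derivative pushes `f` strictly below that level just to the right. At `a = 0`, where no
derivative information is available, run the same induction with any level above `P(0)` instead.
-/

open Filter Set

/-- Upper-right Dini derivative (with values in `EReal`). -/
noncomputable def diniUR (g : ℝ → ℝ) (t : ℝ) : EReal :=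
  Filter.limsup (fun h => (((g (t + h) - g t) / h : ℝ) : EReal)) (nhdsWithin 0 (Set.Ioi 0))

open Topology

theorem eventually_lt_of_diniUR_neg {g : ℝ → ℝ} {t : ℝ} (h : diniUR g t < 0) :
    ∀ᶠ r in 𝓝[>] t, g r < g t := by
  have hslope : ∀ᶠ h in 𝓝[>] (0 : ℝ), (g (t + h) - g t) / h < 0 := by
    filter_upwards [eventually_lt_of_limsup_lt h] with h hh using EReal.coe_neg'.1 hh
  have hshift : Tendsto (fun r => r - t) (𝓝[>] t) (𝓝[>] 0) := by
    refine tendsto_nhdsWithin_of_tendsto_nhds_of_eventually_within _ ?_ ?_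
    · exact tendsto_nhdsWithin_of_tendsto_nhds (by simpa using (continuous_sub_right t).tendsto t)
    · filter_upwards [self_mem_nhdsWithin] with r hr using sub_pos.2 (mem_Ioi.1 hr)
  filter_upwards [hshift.eventually hslope, self_mem_nhdsWithin] with r hr hrt
  rw [add_sub_cancel] at hr
  exact sub_neg.1 (neg_of_div_neg_left hr (sub_pos.2 (mem_Ioi.1 hrt)).le)

noncomputable def windowSup (f α : ℝ → ℝ) (t : ℝ) : ℝ :=
  sSup (f '' Icc (α t) t)

section windowSup

variable {f α : ℝ → ℝ} {a b c s t : ℝ}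

theorem le_windowSup (hf : ContinuousOn f (Icc (α t) t)) (hs : s ∈ Icc (α t) t) :
    f s ≤ windowSup f α t :=
  le_csSup (isCompact_Icc.bddAbove_image hf) (mem_image_of_mem f hs)

theorem windowSup_le_of_forall_Ioc_le (hαst : α s ≤ α t) (hαt : α t ≤ t)
    (hf : ContinuousOn f (Icc (α s) s)) (hs : windowSup f α s ≤ c)
    (hst : ∀ x ∈ Ioc s t, f x ≤ c) : windowSup f α t ≤ c := by
  refine csSup_le ((nonempty_Icc.2 hαt).image f) ?_
  rintro _ ⟨x, hx, rfl⟩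
  rcases le_or_gt x s with hxs | hsx
  · exact (le_windowSup hf ⟨hαst.trans hx.1, hxs⟩).trans hs
  · exact hst x ⟨hsx, hx.2⟩

theorem forall_Icc_le_of_windowSup_le (hα : Monotone α) (hαle : ∀ x, a ≤ x → α x ≤ x)
    (hf : ContinuousOn f (Ici (α a))) (ha : windowSup f α a ≤ c)
    (hrec : ∀ x ∈ Ico a b, f x = c → f x = windowSup f α x → ∀ᶠ r in 𝓝[>] x, f r < c) :
    ∀ x ∈ Icc a b, f x ≤ c := by
  have hfa : ContinuousOn f (Icc (α a) a) := hf.mono Icc_subset_Ici_self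
  have hclosed : IsClosed ({x | f x ≤ c} ∩ Icc a b) := by
    rw [inter_comm]
    exact (hf.mono fun x hx => (hαle a le_rfl).trans hx.1).preimage_isClosed_of_isClosed
      isClosed_Icc isClosed_Iic
  refine hclosed.Icc_subset_of_forall_mem_nhdsGT_of_Icc_subset
    ((le_windowSup hfa ⟨hαle a le_rfl, le_rfl⟩).trans ha) fun t ht hsub => ?_
  have hαt : α a ≤ t := (hαle a le_rfl).trans ht.1
  have hPt : windowSup f α t ≤ c :=
    windowSup_le_of_forall_Ioc_le (hα ht.1) (hαle t ht.1) hfa ha fun x hx => hsub ⟨hx.1.le, hx.2⟩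
  have hft : f t ≤ c := hsub ⟨ht.1, le_rfl⟩
  rcases hft.lt_or_eq with hlt | heq
  · exact (Tendsto.eventually_lt_const hlt ((hf t hαt).mono (Ioi_subset_Ici hαt))).mono
      fun r hr => le_of_lt hr
  · have hrecord : f t = windowSup f α t :=
      le_antisymm (le_windowSup (hf.mono fun x hx => (hα ht.1).trans hx.1) ⟨hαle t ht.1, le_rfl⟩)
        (heq ▸ hPt)
    exact (hrec t ht heq hrecord).mono fun r hr => hr.le

end windowSup

theorem mu_stability_maximum_argument_general
    (τ₀ : ℝ) (y μ τ : ℝ → ℝ)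
    (hycont : ContinuousOn y (Set.Ici (-τ₀)))
    (hμpos : ∀ t, 0 < μ t) (hμC1 : ContDiff ℝ 1 μ)
    (hτnn : ∀ t, 0 ≤ t → 0 ≤ τ t)
    (hτlb : ∀ t, 0 ≤ t → -τ₀ ≤ t - τ t)
    (hτmono : Monotone (fun t => t - τ t))
    (P : ℝ → ℝ)
    (hP : ∀ t, P t = sSup ((fun s => μ s * y s) '' Set.Icc (t - τ t) t))
    (hkey : ∀ t, 0 < t → μ t * y t = P t → diniUR (fun s => μ s * y s) t < 0) :
    AntitoneOn P (Set.Ioi 0) ∧ ∀ t, 0 ≤ t → y t ≤ P 0 / μ t := by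
  set f : ℝ → ℝ := fun s => μ s * y s
  set α : ℝ → ℝ := fun t => t - τ t
  obtain rfl : P = windowSup f α := funext hP
  have hαle : ∀ t, 0 ≤ t → α t ≤ t := fun t ht => sub_le_self t (hτnn t ht)
  have hf : ∀ a, 0 ≤ a → ContinuousOn f (Ici (α a)) := fun a ha =>
    (hμC1.continuous.continuousOn.mul hycont).mono (Ici_subset_Ici.2 (hτlb a ha))
  have hrec : ∀ x, 0 < x → f x = windowSup f α x → ∀ᶠ r in 𝓝[>] x, f r < f x :=
    fun x hx hrecord => eventually_lt_of_diniUR_neg (hkey x hx hrecord)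
  constructor
  · intro a ha b _ hab
    have hfab : ∀ x ∈ Icc a b, f x ≤ windowSup f α a :=
      forall_Icc_le_of_windowSup_le hτmono (fun x hx => hαle x (ha.le.trans hx)) (hf a ha.le)
        le_rfl fun x hx hfx hrecord => hfx ▸ hrec x (ha.trans_le hx.1) hrecord
    exact windowSup_le_of_forall_Ioc_le (hτmono hab) (hαle b (ha.trans_le hab).le)
      ((hf a ha.le).mono Icc_subset_Ici_self) le_rfl fun x hx => hfab x ⟨hx.1.le, hx.2⟩
  · intro t ht
    rw [le_div_iff₀ (hμpos t), mul_comm]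
    refine le_of_forall_gt_imp_ge_of_dense fun c hc =>
      forall_Icc_le_of_windowSup_le hτmono hαle (hf 0 le_rfl) hc.le ?_ t ⟨ht, le_rfl⟩
    intro x hx hfx hrecord
    rcases hx.1.eq_or_lt with rfl | hpos
    · exact absurd (hrecord.symm.trans hfx) hc.ne
    · exact hfx ▸ hrec x hpos hrecord

/-- Halanay-type maximum-function argument: if the upper-right derivative of
`μ y` is negative whenever `μ(t)y(t)` attains the running maximum
`P(t) = sup_{t-τ(t) ≤ s ≤ t} μ(s)y(s)`, then `P` is nonincreasing on `(0,∞)` and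
`y(t) ≤ P(0)/μ(t)` for all `t ≥ 0`. -/
theorem mu_stability_maximum_argument
    (τ₀ : ℝ) (hτ₀ : 0 ≤ τ₀) (y μ τ : ℝ → ℝ)
    (hycont : ContinuousOn y (Set.Ici (-τ₀))) (hynn : ∀ t, -τ₀ ≤ t → 0 ≤ y t)
    (hydiff : DifferentiableOn ℝ y (Set.Ioi 0))
    (hμpos : ∀ t, 0 < μ t) (hμmono : Monotone μ) (hμC1 : ContDiff ℝ 1 μ)
    (hτcont : Continuous τ) (hτnn : ∀ t, 0 ≤ t → 0 ≤ τ t)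
    (hτlb : ∀ t, 0 ≤ t → -τ₀ ≤ t - τ t)
    (hτmono : Monotone (fun t => t - τ t))
    (hτtop : Tendsto (fun t => t - τ t) atTop atTop)
    (P : ℝ → ℝ)
    (hP : ∀ t, P t = sSup ((fun s => μ s * y s) '' Set.Icc (t - τ t) t))
    (hkey : ∀ t, 0 < t → μ t * y t = P t → diniUR (fun s => μ s * y s) t < 0) :
    AntitoneOn P (Set.Ioi 0) ∧ ∀ t, 0 ≤ t → y t ≤ P 0 / μ t :=
  mu_stability_maximum_argument_general τ₀ y μ τ hycont hμpos hμC1 hτnn hτlb hτmono P hP hkey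
end

section
/- Let P : [T,∞) → ℝ be defined by P(t) = sup_{t-τ(t) ≤ s ≤ t} y(s) where y is continuous and τ is continuous nonnegative with t - τ(t) nondecreasing. If at every time t where y(t) = P(t) the function y has strictly negative upper-right Dini derivative, then P is nonincreasing on [T,∞). -/
/-!
Fix `s ≥ T`; we show `y u ≤ P s` for every `u ≥ s` by continuous induction on `u`. If the
bound holds on `[s, t]` and is attained at `t`, then the window of `t` lies in the window of
`s` together with `[s, t]`, so `y t = P t`; the negative Dini derivative then pushes `y` strictly
below `P s` just to the right of `t`. Monotonicity of `P` follows by splitting the window of `b`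
at `a`.
-/

open Filter Set

open Topology

theorem eventually_nhdsGT_lt_of_diniUR_neg {g : ℝ → ℝ} {t : ℝ} (hg : diniUR g t < 0) :
    ∀ᶠ u in 𝓝[>] t, g u < g t := by
  have hquot : ∀ᶠ h in 𝓝[>] 0, (((g (t + h) - g t) / h : ℝ) : EReal) < 0 :=
    eventually_lt_of_limsup_lt hg
  have hshift : Tendsto (fun u => u - t) (𝓝[>] t) (𝓝[>] 0) :=
    tendsto_nhdsWithin_iff.2
      ⟨((continuous_sub_right t).tendsto' t 0 (sub_self t)).mono_left nhdsWithin_le_nhds,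
        eventually_nhdsWithin_of_forall fun _ hu => mem_Ioi.2 (sub_pos.2 hu)⟩
  filter_upwards [hshift.eventually hquot, self_mem_nhdsWithin] with u hu htu
  rw [add_sub_cancel] at hu
  have hslope : (g u - g t) / (u - t) < 0 := by exact_mod_cast hu
  linarith [(div_lt_iff₀ (sub_pos.2 htu)).1 hslope]

section WindowSup

variable {y τ P : ℝ → ℝ}

theorem le_windowSup_s19 (hy : Continuous y) (hP : ∀ t, P t = sSup (y '' Icc (t - τ t) t))
    {t u : ℝ} (hu : u ∈ Icc (t - τ t) t) : y u ≤ P t :=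
  hP t ▸ le_csSup (isCompact_Icc.image hy).bddAbove (mem_image_of_mem y hu)

theorem self_le_windowSup (hy : Continuous y) (hτnn : ∀ t, 0 ≤ τ t)
    (hP : ∀ t, P t = sSup (y '' Icc (t - τ t) t)) (t : ℝ) : y t ≤ P t :=
  le_windowSup_s19 hy hP ⟨by linarith [hτnn t], le_rfl⟩

theorem windowSup_le_of_forall_Icc_le (hy : Continuous y) (hτnn : ∀ t, 0 ≤ τ t)
    (hmono : Monotone (fun t => t - τ t)) (hP : ∀ t, P t = sSup (y '' Icc (t - τ t) t))
    {a b : ℝ} (hab : a ≤ b) (h : ∀ u ∈ Icc a b, y u ≤ P a) : P b ≤ P a := by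
  rw [hP b]
  refine csSup_le ((nonempty_Icc.2 (by linarith [hτnn b])).image y) ?_
  rintro _ ⟨u, hu, rfl⟩
  rcases le_total u a with hua | hau
  · exact le_windowSup_s19 hy hP ⟨(hmono hab).trans hu.1, hua⟩
  · exact h u ⟨hau, hu.2⟩

theorem le_windowSup_of_le (hy : Continuous y) (hτnn : ∀ t, 0 ≤ τ t)
    (hmono : Monotone (fun t => t - τ t)) (hP : ∀ t, P t = sSup (y '' Icc (t - τ t) t))
    {T : ℝ} (hkey : ∀ t, T ≤ t → y t = P t → diniUR y t < 0)
    {s : ℝ} (hs : T ≤ s) {u : ℝ} (hsu : s ≤ u) : y u ≤ P s := by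
  have hclosed : IsClosed ({v | y v ≤ P s} ∩ Icc s u) :=
    (isClosed_le hy continuous_const).inter isClosed_Icc
  refine hclosed.Icc_subset_of_forall_mem_nhdsGT_of_Icc_subset (self_le_windowSup hy hτnn hP s)
    (fun t ht hbelow => ?_) ⟨hsu, le_rfl⟩
  rcases (show y t ≤ P s from hbelow ⟨ht.1, le_rfl⟩).lt_or_eq with hlt | heq
  · exact mem_nhdsWithin_of_mem_nhds
      (hy.continuousAt.eventually_lt continuousAt_const hlt |>.mono fun _ => le_of_lt)
  · have hPt : P t ≤ P s := windowSup_le_of_forall_Icc_le hy hτnn hmono hP ht.1 hbelow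
    have hdini : diniUR y t < 0 :=
      hkey t (hs.trans ht.1) (le_antisymm (self_le_windowSup hy hτnn hP t) (heq ▸ hPt))
    filter_upwards [eventually_nhdsGT_lt_of_diniUR_neg hdini] with v hv
    exact (heq ▸ hv).le

end WindowSup

theorem maximum_function_nonincreasing_general
    (T : ℝ) (y τ : ℝ → ℝ) (hy : Continuous y)
    (hτnn : ∀ t, 0 ≤ τ t) (hmono : Monotone (fun t => t - τ t))
    (P : ℝ → ℝ) (hP : ∀ t, P t = sSup (y '' Set.Icc (t - τ t) t))
    (hkey : ∀ t, T ≤ t → y t = P t → diniUR y t < 0) :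
    AntitoneOn P (Set.Ici T) := fun _ ha _ _ hab =>
  windowSup_le_of_forall_Icc_le hy hτnn hmono hP hab fun _ hu =>
    le_windowSup_of_le hy hτnn hmono hP hkey ha hu.1

/-- abstract maximum-function monotonicity lemma: with
`P(t) = sup_{t-τ(t) ≤ s ≤ t} y(s)`, if `y` has strictly negative upper-right Dini derivative
at every time where `y(t) = P(t)`, then `P` is nonincreasing on `[T,∞)`. -/
theorem maximum_function_nonincreasing
    (T : ℝ) (y τ : ℝ → ℝ) (hy : Continuous y) (hτ : Continuous τ)
    (hτnn : ∀ t, 0 ≤ τ t) (hmono : Monotone (fun t => t - τ t))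
    (P : ℝ → ℝ) (hP : ∀ t, P t = sSup (y '' Set.Icc (t - τ t) t))
    (hkey : ∀ t, T ≤ t → y t = P t → diniUR y t < 0) :
    AntitoneOn P (Set.Ici T) :=
  maximum_function_nonincreasing_general T y τ hy hτnn hmono P hP hkey
end
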